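/- arXiv:2408.16161 — 4 statements merged into one kernel-verified Lean document; each statement's English description precedes it below -/
import Mathlib

section
/- Let ρ: F2 → SU(2) be given by noncommuting unit quaternions X1, X2. If (X1 X2)^ℓ commutes with X2, where X2 ≠ ±1 and the pair {X1, X2} is irreducible (no common invariant complex line, equivalently X1 and X2 do not lie in a common one-parameter subgroup), then (X1 X2)^ℓ = ±1. -/
open Quaternion

private lemma cross_key (a1 a2 a3 b1 b2 b3 c1 c2 c3 : ℝ) (ha : a1 ≠ 0)
    (hab1 : a2*b3 = a3*b2) (hab2 : a3*b1 = a1*b3) (hab3 : a1*b2 = a2*b1)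
    (hac1 : a2*c3 = a3*c2) (hac2 : a3*c1 = a1*c3) (_hac3 : a1*c2 = a2*c1) :
    b2*c3 = b3*c2 ∧ b3*c1 = b1*c3 ∧ b1*c2 = b2*c1 := by
  refine ⟨?_, ?_, ?_⟩ <;> apply mul_left_cancel₀ ha
  · linear_combination c3*hab3 + b1*hac1 + c2*hab2
  · linear_combination -c1*hab2 + b1*hac2
  · linear_combination b1*_hac3 - c1*hab3

private lemma cross_trans (a1 a2 a3 b1 b2 b3 c1 c2 c3 : ℝ)
    (ha : ¬ (a1 = 0 ∧ a2 = 0 ∧ a3 = 0))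
    (hab1 : a2*b3 = a3*b2) (hab2 : a3*b1 = a1*b3) (hab3 : a1*b2 = a2*b1)
    (hac1 : a2*c3 = a3*c2) (hac2 : a3*c1 = a1*c3) (hac3 : a1*c2 = a2*c1) :
    b2*c3 = b3*c2 ∧ b3*c1 = b1*c3 ∧ b1*c2 = b2*c1 := by
  by_cases h1 : a1 = 0
  · by_cases h2 : a2 = 0
    · have h3 : a3 ≠ 0 := fun h3 => ha ⟨h1, h2, h3⟩
      obtain ⟨x, y, z⟩ := cross_key a3 a1 a2 b3 b1 b2 c3 c1 c2 h3 hab3 hab1 hab2 hac3 hac1 hac2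
      exact ⟨y, z, x⟩
    · obtain ⟨x, y, z⟩ := cross_key a2 a3 a1 b2 b3 b1 c2 c3 c1 h2 hab2 hab3 hab1 hac2 hac3 hac1
      exact ⟨z, x, y⟩
  · exact cross_key a1 a2 a3 b1 b2 b3 c1 c2 c3 h1 hab1 hab2 hab3 hac1 hac2 hac3

private lemma comm_iff (a b : ℍ[ℝ]) : Commute a b ↔
    (a.imJ*b.imK = a.imK*b.imJ ∧ a.imK*b.imI = a.imI*b.imK ∧ a.imI*b.imJ = a.imJ*b.imI) := by
  constructor
  · intro h
    have h' := h.eq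
    rw [Quaternion.ext_iff] at h'
    simp only [Quaternion.re_mul, Quaternion.imI_mul, Quaternion.imJ_mul,
      Quaternion.imK_mul] at h'
    obtain ⟨_, e1, e2, e3⟩ := h'
    exact ⟨by linarith, by linarith, by linarith⟩
  · rintro ⟨e1, e2, e3⟩
    have : a * b = b * a := by
      ext <;> simp only [Quaternion.re_mul, Quaternion.imI_mul, Quaternion.imJ_mul,
        Quaternion.imK_mul] <;> linarith
    exact this

theorem stmt5 (X₁ X₂ : ℍ[ℝ]) (h₁ : ‖X₁‖ = 1) (h₂ : ‖X₂‖ = 1)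
    (hX₂ : X₂ ≠ 1 ∧ X₂ ≠ -1) (hirr : ¬ Commute X₁ X₂)
    (ℓ : ℕ) (hℓ : 1 ≤ ℓ) (hc : Commute ((X₁ * X₂) ^ ℓ) X₂) :
    (X₁ * X₂) ^ ℓ = 1 ∨ (X₁ * X₂) ^ ℓ = -1 := by
  set q := (X₁ * X₂) ^ ℓ with hq
  by_cases him : q.imI = 0 ∧ q.imJ = 0 ∧ q.imK = 0
  · -- q is real with norm 1
    obtain ⟨hI, hJ, hK⟩ := him
    have hnorm : ‖q‖ = 1 := by
      rw [hq, norm_pow, norm_mul, h₁, h₂, one_mul, one_pow]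
    have hqre : q = (q.re : ℍ[ℝ]) := by
      ext <;> simp [hI, hJ, hK]
    rw [hqre] at hnorm
    rw [Quaternion.norm_coe] at hnorm
    rcases abs_eq (by norm_num : (0:ℝ) ≤ 1) |>.mp hnorm with h | h
    · left; rw [hqre, h]; norm_num
    · right; rw [hqre, h]; norm_num
  · -- q has nonzero imaginary part; derive Commute (X₁*X₂) X₂ and contradiction
    exfalso
    have hp : Commute q (X₁ * X₂) := ((Commute.refl (X₁*X₂)).pow_left ℓ)
    rw [comm_iff] at hc hp
    obtain ⟨b1, b2, b3⟩ := hc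
    obtain ⟨c1, c2, c3⟩ := hp
    have him' : ¬ (q.imI = 0 ∧ q.imJ = 0 ∧ q.imK = 0) := him
    have := cross_trans q.imI q.imJ q.imK X₂.imI X₂.imJ X₂.imK
      (X₁*X₂).imI (X₁*X₂).imJ (X₁*X₂).imK him' b1 b2 b3 c1 c2 c3
    obtain ⟨d1, d2, d3⟩ := this
    have hcomm : Commute X₂ (X₁ * X₂) := by
      rw [comm_iff]; exact ⟨d1, d2, d3⟩
    have hX₂0 : X₂ ≠ 0 := by
      intro h; rw [h] at h₂; simp at h₂
    apply hirr
    have := hcomm.eq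
    -- X₂ * (X₁ * X₂) = (X₁ * X₂) * X₂ ⟹ X₂ * X₁ = X₁ * X₂
    have : X₂ * X₁ * X₂ = X₁ * X₂ * X₂ := by
      rw [mul_assoc X₂ X₁ X₂]; exact this
    have := mul_right_cancel₀ hX₂0 this
    exact this.symm
end

section
/- For α1, α2 ∈ (0,π) and φ ∈ (0,π), the plane {x ∈ ℝ³ : n·x = d} with n and d as above intersects the unit sphere S² ⊂ ℝ³ in a circle of positive radius, and the point P1 = (cos φ, sin φ, 0) lies on this intersection. -/
open Real
open scoped RealInnerProductSpace

noncomputable def vec3 (a b c : ℝ) : EuclideanSpace ℝ (Fin 3) :=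
  (WithLp.equiv 2 (Fin 3 → ℝ)).symm ![a, b, c]

/-! A plane `⟪n, x⟫ = d` meets the sphere of radius `R` about the origin in the sphere, inside the
plane, centred at the foot `(d / ‖n‖²) • n` of the perpendicular from the origin, of radius
`√(R² - d² / ‖n‖²)` by Pythagoras. For the given `n` and `d` one computes
`‖n‖² = d² + (sin α₂ sin φ)²`, so `|d| < ‖n‖` and the radius is positive. -/

section PlaneSphere

variable {E : Type*} [NormedAddCommGroup E] [InnerProductSpace ℝ E]

lemma inner_div_norm_sq_smul_self {n : E} (hn : n ≠ 0) (d : ℝ) :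
    ⟪n, (d / ‖n‖ ^ 2) • n⟫ = d := by
  rw [real_inner_smul_right, real_inner_self_eq_norm_sq]
  field_simp [norm_ne_zero_iff.2 hn]

lemma dist_div_norm_sq_smul_sq {n x : E} (hn : n ≠ 0) {d : ℝ} (hx : ⟪n, x⟫ = d) :
    dist x ((d / ‖n‖ ^ 2) • n) ^ 2 = ‖x‖ ^ 2 - d ^ 2 / ‖n‖ ^ 2 := by
  have hn' : ‖n‖ ≠ 0 := norm_ne_zero_iff.2 hn
  rw [dist_eq_norm, norm_sub_sq_real, real_inner_smul_right, real_inner_comm, hx, norm_smul,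
    mul_pow, Real.norm_eq_abs, sq_abs]
  field_simp
  ring

theorem exists_plane_inter_sphere_eq {n : E} {d R : ℝ} (hR : 0 ≤ R)
    (hd : d ^ 2 < R ^ 2 * ‖n‖ ^ 2) :
    ∃ (c : E) (r : ℝ), 0 < r ∧ ⟪n, c⟫ = d ∧
      {x : E | ⟪n, x⟫ = d ∧ ‖x‖ = R} = {x : E | ⟪n, x⟫ = d ∧ dist x c = r} := by
  have hn : n ≠ 0 := by
    rintro rfl
    rw [norm_zero] at hd
    nlinarith [sq_nonneg d]
  have hnorm : 0 < ‖n‖ ^ 2 := by positivity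
  have hr : 0 < R ^ 2 - d ^ 2 / ‖n‖ ^ 2 := by
    rw [sub_pos, div_lt_iff₀ hnorm]
    exact hd
  refine ⟨(d / ‖n‖ ^ 2) • n, √(R ^ 2 - d ^ 2 / ‖n‖ ^ 2), sqrt_pos.2 hr,
    inner_div_norm_sq_smul_self hn d, ?_⟩
  ext x
  simp only [Set.mem_ofPred_eq, and_congr_right_iff]
  intro hx
  rw [← sq_eq_sq₀ (norm_nonneg x) hR, ← sq_eq_sq₀ dist_nonneg (sqrt_nonneg _),
    sq_sqrt hr.le, dist_div_norm_sq_smul_sq hn hx, sub_left_inj]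

end PlaneSphere

lemma inner_vec3 (a b c a' b' c' : ℝ) :
    ⟪vec3 a b c, vec3 a' b' c'⟫ = a * a' + b * b' + c * c' := by
  simp [vec3, PiLp.inner_apply, Fin.sum_univ_three]
  ring

lemma norm_vec3_sq (a b c : ℝ) : ‖vec3 a b c‖ ^ 2 = a ^ 2 + b ^ 2 + c ^ 2 := by
  rw [← real_inner_self_eq_norm_sq, inner_vec3]
  ring

theorem stmt9_general (α₁ α₂ φ : ℝ) (hα₂ : α₂ ∈ Set.Ioo 0 π)
    (hφ : φ ∈ Set.Ioo 0 π)
    (n : EuclideanSpace ℝ (Fin 3)) (d : ℝ)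
    (hn : n = vec3 (sin α₁ * cos α₂ * cos φ + cos α₁ * sin α₂)
        (sin α₁ * cos α₂ * sin φ) (- (sin α₁ * sin α₂ * sin φ)))
    (hd : d = sin α₁ * cos α₂ + cos α₁ * sin α₂ * cos φ) :
    ∃ (center : EuclideanSpace ℝ (Fin 3)) (r : ℝ), 0 < r ∧
      ⟪n, center⟫ = d ∧
      ({x : EuclideanSpace ℝ (Fin 3) | ⟪n, x⟫ = d ∧ ‖x‖ = 1} =
        {x : EuclideanSpace ℝ (Fin 3) | ⟪n, x⟫ = d ∧ dist x center = r}) ∧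
      (⟪n, vec3 (cos φ) (sin φ) 0⟫ = d ∧ ‖vec3 (cos φ) (sin φ) 0‖ = 1) := by
  have hsin : 0 < sin α₂ * sin φ :=
    mul_pos (sin_pos_of_pos_of_lt_pi hα₂.1 hα₂.2) (sin_pos_of_pos_of_lt_pi hφ.1 hφ.2)
  have hnorm : ‖n‖ ^ 2 = d ^ 2 + (sin α₂ * sin φ) ^ 2 := by
    rw [hn, hd, norm_vec3_sq]
    linear_combination (sin α₁ ^ 2 * cos α₂ ^ 2 - cos α₁ ^ 2 * sin α₂ ^ 2) * sin_sq_add_cos_sq φ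
      + (sin φ ^ 2 * sin α₂ ^ 2) * sin_sq_add_cos_sq α₁
  have hd_lt : d ^ 2 < 1 ^ 2 * ‖n‖ ^ 2 := by
    rw [one_pow, one_mul, hnorm]
    linarith [pow_pos hsin 2]
  obtain ⟨c, r, hr, hc, hcircle⟩ := exists_plane_inter_sphere_eq zero_le_one hd_lt
  refine ⟨c, r, hr, hc, hcircle, ?_, ?_⟩
  · rw [hn, hd, inner_vec3]
    linear_combination (sin α₁ * cos α₂) * sin_sq_add_cos_sq φ
  · rw [← sq_eq_sq₀ (norm_nonneg _) zero_le_one, one_pow, norm_vec3_sq]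
    linear_combination sin_sq_add_cos_sq φ

theorem stmt9 (α₁ α₂ φ : ℝ) (hα₁ : α₁ ∈ Set.Ioo 0 π) (hα₂ : α₂ ∈ Set.Ioo 0 π)
    (hφ : φ ∈ Set.Ioo 0 π)
    (n : EuclideanSpace ℝ (Fin 3)) (d : ℝ)
    (hn : n = vec3 (sin α₁ * cos α₂ * cos φ + cos α₁ * sin α₂)
        (sin α₁ * cos α₂ * sin φ) (- (sin α₁ * sin α₂ * sin φ)))
    (hd : d = sin α₁ * cos α₂ + cos α₁ * sin α₂ * cos φ) :
    ∃ (center : EuclideanSpace ℝ (Fin 3)) (r : ℝ), 0 < r ∧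
      ⟪n, center⟫ = d ∧
      ({x : EuclideanSpace ℝ (Fin 3) | ⟪n, x⟫ = d ∧ ‖x‖ = 1} =
        {x : EuclideanSpace ℝ (Fin 3) | ⟪n, x⟫ = d ∧ dist x center = r}) ∧
      (⟪n, vec3 (cos φ) (sin φ) 0⟫ = d ∧ ‖vec3 (cos φ) (sin φ) 0‖ = 1) :=
  stmt9_general α₁ α₂ φ hα₂ hφ n d hn hd
end

section
/- For α1, α2 ∈ (0,π), φ ∈ (0,π), and a positive integer ℓ, with X1 = cos(α1) + sin(α1)(cos(φ)i + sin(φ)j), X2 = cos(α2) + sin(α2)i, P1 = cos(φ)i + sin(φ)j, and Q1 = (X1X2)^ℓ · P1 · (X1X2)^{−ℓ}, the i-component of Q1 is a polynomial in cos(φ), and the j- and k-components of Q1 are each sin(φ) times a polynomial in cos(φ). -/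
open Real Quaternion Polynomial

/-!
Write `c = cos φ` and `s = sin φ`. Every quaternion built from `X₁`, `X₂` and `P₁` by products
and conjugation has the form `a(c) + b(c) i + s (p(c) j + q(c) k)` with polynomials `a, b, p, q`:
the quaternions `i` and `J = s j` satisfy `i² = -1` and `J² = -s² = c² - 1`, so these elements
are the image of the quaternion algebra `ℍ[ℝ[X], -1, 0, X² - 1]` under a ring homomorphism
evaluating `X` at `c` and sending its `j` to `s j`. Since `X₁ X₂` has norm one, its inverse is its
conjugate, and `Q₁` is the image of an element whose coordinates are the required polynomials.
-/

namespace QuaternionAlgebra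

variable {R S : Type*} [CommRing R] [CommRing S] {c₁ c₂ c₃ : R} {d₁ d₂ d₃ : S}

def mapRescaleJ (f : R →+* S) (s : S) (h₁ : f c₁ = d₁) (h₂ : f c₂ = d₂)
    (h₃ : f c₃ = d₃ * s ^ 2) : ℍ[R,c₁,c₂,c₃] →+* ℍ[S,d₁,d₂,d₃] where
  toFun a := ⟨f a.re, f a.imI, s * f a.imJ, s * f a.imK⟩
  map_one' := by ext <;> simp
  map_mul' a b := by ext <;> simp [h₁, h₂, h₃] <;> ring
  map_zero' := by ext <;> simp
  map_add' a b := by ext <;> simp <;> ring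

theorem mapRescaleJ_star (f : R →+* S) (s : S) (h₁ : f c₁ = d₁) (h₂ : f c₂ = d₂)
    (h₃ : f c₃ = d₃ * s ^ 2) (a : ℍ[R,c₁,c₂,c₃]) :
    mapRescaleJ f s h₁ h₂ h₃ (star a) = star (mapRescaleJ f s h₁ h₂ h₃ a) := by
  ext <;> simp [mapRescaleJ, h₂]

end QuaternionAlgebra

theorem Quaternion.inv_eq_star_of_normSq_eq_one {R : Type*} [Field R] [LinearOrder R]
    [IsStrictOrderedRing R] {a : ℍ[R]} (h : normSq a = 1) : a⁻¹ = star a :=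
  inv_eq_of_mul_eq_one_right (by rw [self_mul_star, h, coe_one])

noncomputable def evalCosSin (φ : ℝ) : ℍ[ℝ[X],-1,0,X ^ 2 - 1] →+* ℍ[ℝ] :=
  QuaternionAlgebra.mapRescaleJ (evalRingHom (cos φ)) (sin φ) (by simp) (by simp)
    (by simp; linarith [sin_sq_add_cos_sq φ])

theorem evalCosSin_mk (φ : ℝ) (a₁ a₂ a₃ a₄ : ℝ[X]) :
    evalCosSin φ ⟨a₁, a₂, a₃, a₄⟩ =
      ⟨a₁.eval (cos φ), a₂.eval (cos φ), sin φ * a₃.eval (cos φ), sin φ * a₄.eval (cos φ)⟩ :=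
  rfl

theorem evalCosSin_star (φ : ℝ) (a : ℍ[ℝ[X],-1,0,X ^ 2 - 1]) :
    evalCosSin φ (star a) = star (evalCosSin φ a) :=
  QuaternionAlgebra.mapRescaleJ_star ..

theorem stmt12_general (α₁ α₂ : ℝ) (ℓ : ℕ) :
    ∃ p q r : Polynomial ℝ, ∀ φ ∈ Set.Ioo (0 : ℝ) π,
      ∀ X₁ X₂ P₁ Q₁ : ℍ[ℝ],
        X₁ = (⟨cos α₁, sin α₁ * cos φ, sin α₁ * sin φ, 0⟩ : ℍ[ℝ]) →
        X₂ = (⟨cos α₂, sin α₂, 0, 0⟩ : ℍ[ℝ]) →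
        P₁ = (⟨0, cos φ, sin φ, 0⟩ : ℍ[ℝ]) →
        Q₁ = (X₁ * X₂) ^ ℓ * P₁ * ((X₁ * X₂) ^ ℓ)⁻¹ →
        Q₁.imI = p.eval (cos φ) ∧
        Q₁.imJ = sin φ * q.eval (cos φ) ∧
        Q₁.imK = sin φ * r.eval (cos φ) := by
  let x : ℍ[ℝ[X],-1,0,X ^ 2 - 1] :=
    ⟨C (cos α₁), C (sin α₁) * X, C (sin α₁), 0⟩ * ⟨C (cos α₂), C (sin α₂), 0, 0⟩
  let w : ℍ[ℝ[X],-1,0,X ^ 2 - 1] := x ^ ℓ * ⟨0, X, 1, 0⟩ * star (x ^ ℓ)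
  refine ⟨w.imI, w.imJ, w.imK, fun φ _ X₁ X₂ P₁ Q₁ hX₁ hX₂ hP₁ hQ₁ => ?_⟩
  have hx : evalCosSin φ x = X₁ * X₂ := by
    rw [map_mul, hX₁, hX₂]
    congr 1 <;> ext <;> simp [evalCosSin_mk]; ring
  have hp : evalCosSin φ ⟨0, X, 1, 0⟩ = P₁ := by
    rw [hP₁]; ext <;> simp [evalCosSin_mk]
  have hX₁_norm : normSq X₁ = 1 := by
    rw [normSq_def', hX₁]
    linear_combination sin α₁ ^ 2 * sin_sq_add_cos_sq φ + sin_sq_add_cos_sq α₁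
  have hX₂_norm : normSq X₂ = 1 := by
    rw [normSq_def', hX₂]
    linear_combination sin_sq_add_cos_sq α₂
  have hnorm : normSq ((X₁ * X₂) ^ ℓ) = 1 := by
    rw [map_pow, map_mul, hX₁_norm, hX₂_norm, one_mul, one_pow]
  have hQ : evalCosSin φ w = Q₁ := by
    rw [hQ₁, inv_eq_star_of_normSq_eq_one hnorm, ← hx, ← hp, ← map_pow, ← evalCosSin_star,
      ← map_mul, ← map_mul]
  subst hQ
  exact ⟨rfl, rfl, rfl⟩

theorem stmt12 (α₁ α₂ : ℝ) (hα₁ : α₁ ∈ Set.Ioo 0 π) (hα₂ : α₂ ∈ Set.Ioo 0 π)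
    (ℓ : ℕ) (hℓ : 1 ≤ ℓ) :
    ∃ p q r : Polynomial ℝ, ∀ φ ∈ Set.Ioo (0 : ℝ) π,
      ∀ X₁ X₂ P₁ Q₁ : ℍ[ℝ],
        X₁ = (⟨cos α₁, sin α₁ * cos φ, sin α₁ * sin φ, 0⟩ : ℍ[ℝ]) →
        X₂ = (⟨cos α₂, sin α₂, 0, 0⟩ : ℍ[ℝ]) →
        P₁ = (⟨0, cos φ, sin φ, 0⟩ : ℍ[ℝ]) →
        Q₁ = (X₁ * X₂) ^ ℓ * P₁ * ((X₁ * X₂) ^ ℓ)⁻¹ →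
        Q₁.imI = p.eval (cos φ) ∧
        Q₁.imJ = sin φ * q.eval (cos φ) ∧
        Q₁.imK = sin φ * r.eval (cos φ) :=
  stmt12_general α₁ α₂ ℓ
end

section
/- For the (2,2ℓ)-torus link with ℓ ≥ 2, let H_ℓ(ω1,ω2) be the (ℓ−1)×(ℓ−1) tridiagonal Hermitian matrix with (1−ω̄1)(1−ω̄2)(−1−ω1ω2) on the diagonal, (1−ω̄1)(1−ω̄2) on the superdiagonal, and (1−ω̄1)(1−ω̄2)ω1ω2 on the subdiagonal, where ω1 = e^{2iα1}, ω2 = e^{2iα2}, α1, α2 ∈ (0,π). Then for 2 ≤ m+1 ≤ ℓ, det(H_{m+1}) = 4^m sin^m(α1) sin^m(α2) U_m(cos(α1+α2)), where U_m is the Chebyshev polynomial of the second kind. -/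
open Polynomial Matrix

noncomputable def triM (d b c : ℂ) (n : ℕ) : Matrix (Fin n) (Fin n) ℂ :=
  Matrix.of fun i j : Fin n =>
    if (i : ℕ) = (j : ℕ) then d
    else if (j : ℕ) = (i : ℕ) + 1 then b
    else if (i : ℕ) = (j : ℕ) + 1 then c
    else 0

theorem triM_det_rec (d b c : ℂ) (n : ℕ) :
    (triM d b c (n + 2)).det = d * (triM d b c (n + 1)).det - b * c * (triM d b c n).det := by
  have hval : ∀ j : Fin (n+1), (((1 : Fin (n+2)).succAbove j) : ℕ)
      = if (j:ℕ) = 0 then 0 else (j:ℕ)+1 := by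
    intro j
    induction j using Fin.cases with
    | zero =>
      have : (1 : Fin (n+2)).succAbove 0 = 0 := Fin.succ_succAbove_zero 0
      simp [this]
    | succ k =>
      have : (1 : Fin (n+2)).succAbove k.succ = ((0:Fin (n+1)).succAbove k).succ :=
        Fin.succ_succAbove_succ 0 k
      simp [this]
  have h1 : (triM d b c (n+2)).submatrix Fin.succ ((0 : Fin (n+2)).succAbove)
      = triM d b c (n+1) := by
    ext i j
    simp only [Matrix.submatrix_apply, Fin.zero_succAbove, triM, Matrix.of_apply, Fin.val_succ]
    split_ifs <;> first | rfl | omega | exact ‹False›.elim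
  set B := (triM d b c (n+2)).submatrix Fin.succ ((1 : Fin (n+2)).succAbove) with hB
  have h2 : B.submatrix Fin.succ Fin.succ = triM d b c n := by
    ext i j
    simp only [hB, Matrix.submatrix_apply, triM, Matrix.of_apply, Fin.val_succ, hval,
      Nat.succ_ne_zero, if_false]
    split_ifs <;> first | rfl | omega | exact ‹False›.elim
  have hB0 : B 0 0 = c := by
    simp only [hB, Matrix.submatrix_apply, triM, Matrix.of_apply, hval, Fin.val_succ, Fin.val_zero]
    norm_num
  have hBtail : ∀ i : Fin n, B i.succ 0 = 0 := by
    intro i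
    simp only [hB, Matrix.submatrix_apply, triM, Matrix.of_apply, hval, Fin.val_succ,
      Fin.val_zero, Nat.succ_ne_zero, if_false, if_true, eq_self_iff_true]
    split_ifs <;> first | rfl | omega | exact ‹False›.elim
  have hBdet : B.det = c * (triM d b c n).det := by
    rw [Matrix.det_succ_column_zero, Fin.sum_univ_succ]
    simp [hB0, hBtail, h2, Fin.succAbove_zero]
  have expand := Matrix.det_succ_row_zero (triM d b c (n+2))
  rw [Fin.sum_univ_succ, Fin.sum_univ_succ] at expand
  have hA00 : triM d b c (n+2) 0 0 = d := by simp [triM]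
  have hA01 : triM d b c (n+2) 0 (Fin.succ 0) = b := by simp [triM]
  have hAtail : ∀ j : Fin n, triM d b c (n+2) 0 j.succ.succ = 0 := by
    intro j
    simp only [triM, Matrix.of_apply, Fin.val_succ, Fin.val_zero]
    split_ifs <;> first | rfl | omega | exact ‹False›.elim
  rw [hA00, hA01, Fin.succ_zero_eq_one] at expand
  simp only [hAtail, mul_zero, zero_mul, Finset.sum_const_zero, add_zero] at expand
  rw [expand, h1, ← hB, hBdet]
  simp only [Fin.val_zero, Fin.val_one, pow_zero, pow_one]
  ring

theorem triM_det_cheb (d b c s co : ℂ) (hE1 : d = s * (2 * co)) (hE2 : b * c = s ^ 2) :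
    ∀ n : ℕ, (triM d b c n).det = s ^ n * (Polynomial.Chebyshev.U ℂ (n : ℤ)).eval co := by
  have key : ∀ n : ℕ, (triM d b c n).det = s ^ n * (Polynomial.Chebyshev.U ℂ (n : ℤ)).eval co ∧
      (triM d b c (n+1)).det = s ^ (n+1) * (Polynomial.Chebyshev.U ℂ ((n:ℤ) + 1)).eval co := by
    intro n
    induction n with
    | zero =>
      constructor
      · simp [triM, Matrix.det_fin_zero, Polynomial.Chebyshev.U_zero]
      · rw [show (triM d b c 1).det = d from by simp [Matrix.det_fin_one, triM]]
        simp only [Polynomial.Chebyshev.U_one, Polynomial.eval_mul, Polynomial.eval_ofNat,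
          Polynomial.eval_X, hE1, pow_one]
        norm_num [Polynomial.Chebyshev.U_one]
    | succ n ih =>
      refine ⟨ih.2, ?_⟩
      rw [triM_det_rec, ih.1, ih.2]
      have hU := Polynomial.Chebyshev.U_add_two ℂ (n : ℤ)
      push_cast
      rw [hE2, show ((n:ℤ) + 1 + 1) = (n:ℤ) + 2 from by ring, hU]
      simp only [Polynomial.eval_sub, Polynomial.eval_mul, Polynomial.eval_ofNat,
        Polynomial.eval_X]
      rw [hE1]
      push_cast
      ring
  exact fun n => (key n).1

theorem stmt14 (ℓ m : ℕ) (hm : 1 ≤ m) (hmℓ : m + 1 ≤ ℓ)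
    (α₁ α₂ : ℝ) (hα₁ : α₁ ∈ Set.Ioo 0 π) (hα₂ : α₂ ∈ Set.Ioo 0 π)
    (ω₁ ω₂ : ℂ) (hω₁ : ω₁ = Complex.exp (2 * Complex.I * α₁))
    (hω₂ : ω₂ = Complex.exp (2 * Complex.I * α₂)) :
    Matrix.det (Matrix.of fun i j : Fin m =>
        if (i : ℕ) = (j : ℕ) then
          (1 - (starRingEnd ℂ) ω₁) * (1 - (starRingEnd ℂ) ω₂) * (-1 - ω₁ * ω₂)
        else if (j : ℕ) = (i : ℕ) + 1 then
          (1 - (starRingEnd ℂ) ω₁) * (1 - (starRingEnd ℂ) ω₂)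
        else if (i : ℕ) = (j : ℕ) + 1 then
          (1 - (starRingEnd ℂ) ω₁) * (1 - (starRingEnd ℂ) ω₂) * (ω₁ * ω₂)
        else 0) =
      (((4 * Real.sin α₁ * Real.sin α₂) ^ m *
        (Polynomial.Chebyshev.U ℝ (m : ℤ)).eval (Real.cos (α₁ + α₂)) : ℝ) : ℂ) := by
  set e₁ := Complex.exp (↑α₁ * Complex.I) with he₁
  set e₂ := Complex.exp (↑α₂ * Complex.I) with he₂
  have hne₁ : e₁ ≠ 0 := Complex.exp_ne_zero _
  have hne₂ : e₂ ≠ 0 := Complex.exp_ne_zero _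
  have hω₁' : ω₁ = e₁ * e₁ := by
    rw [hω₁, he₁, ← Complex.exp_add]; ring_nf
  have hω₂' : ω₂ = e₂ * e₂ := by
    rw [hω₂, he₂, ← Complex.exp_add]; ring_nf
  have hc₁ : (starRingEnd ℂ) ω₁ = (e₁ * e₁)⁻¹ := by
    rw [hω₁, ← Complex.exp_conj, he₁, ← Complex.exp_add, ← Complex.exp_neg]
    congr 1
    simp [_root_.map_mul, Complex.conj_I, Complex.conj_ofReal, map_ofNat]
    ring
  have hc₂ : (starRingEnd ℂ) ω₂ = (e₂ * e₂)⁻¹ := by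
    rw [hω₂, ← Complex.exp_conj, he₂, ← Complex.exp_add, ← Complex.exp_neg]
    congr 1
    simp [_root_.map_mul, Complex.conj_I, Complex.conj_ofReal, map_ofNat]
    ring
  have hs₁ : Complex.sin ↑α₁ = (e₁⁻¹ - e₁) * Complex.I / 2 := by
    rw [Complex.sin, he₁, ← Complex.exp_neg]
    ring_nf
  have hs₂ : Complex.sin ↑α₂ = (e₂⁻¹ - e₂) * Complex.I / 2 := by
    rw [Complex.sin, he₂, ← Complex.exp_neg]
    ring_nf
  set co := Complex.cos (↑α₁ + ↑α₂) with hco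
  have hcoe : co = (e₁ * e₂ + (e₁ * e₂)⁻¹) / 2 := by
    have h1 : (↑α₁ + ↑α₂) * Complex.I = ↑α₁ * Complex.I + ↑α₂ * Complex.I := by ring
    have h2 : -(↑α₁ + ↑α₂) * Complex.I = -(↑α₁ * Complex.I + ↑α₂ * Complex.I) := by ring
    rw [hco, Complex.cos, h1, h2, Complex.exp_neg, Complex.exp_add, he₁, he₂]
  set s : ℂ := ((4 * Real.sin α₁ * Real.sin α₂ : ℝ) : ℂ) with hs
  have hE1 : (1 - (starRingEnd ℂ) ω₁) * (1 - (starRingEnd ℂ) ω₂) * (-1 - ω₁ * ω₂)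
      = s * (2 * co) := by
    rw [hc₁, hc₂, hω₁', hω₂', hcoe, hs]
    push_cast
    rw [hs₁, hs₂]
    field_simp
    ring_nf
    simp only [Complex.I_sq]
    ring
  have hE2 : (1 - (starRingEnd ℂ) ω₁) * (1 - (starRingEnd ℂ) ω₂) *
      ((1 - (starRingEnd ℂ) ω₁) * (1 - (starRingEnd ℂ) ω₂) * (ω₁ * ω₂)) = s ^ 2 := by
    rw [hc₁, hc₂, hω₁', hω₂', hs]
    push_cast
    rw [hs₁, hs₂]
    field_simp
    ring_nf
    simp only [Complex.I_pow_four]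
    ring
  have key := triM_det_cheb _ _ _ s co hE1 hE2 m
  have hbridge : ((((Polynomial.Chebyshev.U ℝ (m : ℤ)).eval (Real.cos (α₁ + α₂)) : ℝ)) : ℂ)
      = (Polynomial.Chebyshev.U ℂ (m : ℤ)).eval co := by
    have h := Polynomial.eval₂_at_apply (p := Polynomial.Chebyshev.U ℝ (m : ℤ))
      (algebraMap ℝ ℂ) (Real.cos (α₁ + α₂))
    rw [← Polynomial.eval_map, Polynomial.Chebyshev.map_U, Complex.coe_algebraMap] at h
    rw [hco, ← Complex.ofReal_add, ← Complex.ofReal_cos]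
    exact h.symm
  calc Matrix.det _ = (triM ((1 - (starRingEnd ℂ) ω₁) * (1 - (starRingEnd ℂ) ω₂) * (-1 - ω₁ * ω₂))
        ((1 - (starRingEnd ℂ) ω₁) * (1 - (starRingEnd ℂ) ω₂))
        ((1 - (starRingEnd ℂ) ω₁) * (1 - (starRingEnd ℂ) ω₂) * (ω₁ * ω₂)) m).det := rfl
    _ = s ^ m * (Polynomial.Chebyshev.U ℂ (m : ℤ)).eval co := key
    _ = _ := by rw [hs]; push_cast [hbridge]; ring
end
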